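/- For every g ∈ SL(2, ℂ), the map on ℂP¹ sending zℂ to gzℂ is bi-Lipschitz with bi-Lipschitz constant ‖g‖_op², i.e. for all zℂ, wℂ ∈ ℂP¹ one has ‖g‖_op⁻² · d(zℂ, wℂ) ≤ d(gzℂ, gwℂ) ≤ ‖g‖_op² · d(zℂ, wℂ). -/

import Mathlib

/-! The numerator `z₀w₁ - z₁w₀` of `dCP` is the symplectic form of `ℂ²`, which every
`g ∈ SL(2,ℂ)` preserves, so only the norms in the denominator change, each by a factor
between `‖g⁻¹‖_op⁻¹` and `‖g‖_op`. For `2 × 2` matrices, `g⁻¹ = adj g` is conjugate to `gᴴ`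
by the antiunitary map `u ↦ (ū₁, -ū₀)`, whence `‖g⁻¹‖_op = ‖g‖_op`. -/

noncomputable section

/-- `ℂ²` with the standard Hermitian norm. -/
abbrev C2 := EuclideanSpace ℂ (Fin 2)

/-- The distance between the lines spanned by `z` and `w`, computed on representatives:
`d(zℂ, wℂ) = |z₁w₂ - z₂w₁| / (‖z‖‖w‖)`. -/
def dCP (z w : C2) : ℝ := ‖z 0 * w 1 - z 1 * w 0‖ / (‖z‖ * ‖w‖)

/-- First standard basis vector of `ℂ²`. -/
def e1 : C2 := !₂[1, 0]

/-- Second standard basis vector of `ℂ²`. -/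
def e2 : C2 := !₂[0, 1]

/-- The operator norm of a `2×2` complex matrix acting on `ℂ²` with the Hermitian norm. -/
def opn (A : Matrix (Fin 2) (Fin 2) ℂ) : ℝ := ‖Matrix.toEuclideanCLM (𝕜 := ℂ) A‖

/-- The action of a matrix on a vector of `ℂ²`. -/
def mulVecE (A : Matrix (Fin 2) (Fin 2) ℂ) (z : C2) : C2 := Matrix.toEuclideanCLM (𝕜 := ℂ) A z

open scoped Matrix

def wedge (z w : C2) : ℂ := z 0 * w 1 - z 1 * w 0

lemma dCP_eq_norm_wedge_div (z w : C2) : dCP z w = ‖wedge z w‖ / (‖z‖ * ‖w‖) := rfl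

lemma dCP_nonneg (z w : C2) : 0 ≤ dCP z w := by
  unfold dCP
  positivity

lemma mulVecE_apply (A : Matrix (Fin 2) (Fin 2) ℂ) (z : C2) (i : Fin 2) :
    mulVecE A z i = A i 0 * z 0 + A i 1 * z 1 := by
  show (A *ᵥ WithLp.ofLp z) i = _
  simp [Matrix.mulVec, dotProduct, Fin.sum_univ_two]

lemma wedge_mulVecE (A : Matrix (Fin 2) (Fin 2) ℂ) (z w : C2) :
    wedge (mulVecE A z) (mulVecE A w) = A.det * wedge z w := by
  simp only [wedge, mulVecE_apply, Matrix.det_fin_two]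
  ring

lemma dCP_le_sq_mul_dCP_of_norm_le {z w z' w' : C2} {c : ℝ} (hz : z ≠ 0) (hw : w ≠ 0)
    (hwedge : ‖wedge z' w'‖ = ‖wedge z w‖) (hzc : ‖z‖ ≤ c * ‖z'‖) (hwc : ‖w‖ ≤ c * ‖w'‖) :
    dCP z' w' ≤ c ^ 2 * dCP z w := by
  have hz0 : 0 < ‖z‖ := norm_pos_iff.2 hz
  have hw0 : 0 < ‖w‖ := norm_pos_iff.2 hw
  have hnorms : ‖z‖ * ‖w‖ ≤ c ^ 2 * (‖z'‖ * ‖w'‖) := by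
    calc ‖z‖ * ‖w‖ ≤ (c * ‖z'‖) * (c * ‖w'‖) :=
          mul_le_mul hzc hwc hw0.le (hz0.le.trans hzc)
      _ = c ^ 2 * (‖z'‖ * ‖w'‖) := by ring
  have hc : c ≠ 0 := by
    rintro rfl
    linarith
  calc dCP z' w' = c ^ 2 * (‖wedge z w‖ / (c ^ 2 * (‖z'‖ * ‖w'‖))) := by
        rw [dCP_eq_norm_wedge_div, hwedge]
        field_simp
    _ ≤ c ^ 2 * dCP z w := by
        rw [dCP_eq_norm_wedge_div]
        gcongr

lemma norm_mulVecE_le (A : Matrix (Fin 2) (Fin 2) ℂ) (z : C2) : ‖mulVecE A z‖ ≤ opn A * ‖z‖ :=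
  (Matrix.toEuclideanCLM (𝕜 := ℂ) A).le_opNorm z

open scoped Matrix.Norms.L2Operator in
lemma opn_conjTranspose (A : Matrix (Fin 2) (Fin 2) ℂ) : opn Aᴴ = opn A := by
  rw [opn, opn, ← Matrix.cstar_norm_def, ← Matrix.cstar_norm_def, Matrix.l2_opNorm_conjTranspose]

def jStar (u : C2) : C2 := !₂[star (u 1), -star (u 0)]

lemma norm_jStar (u : C2) : ‖jStar u‖ = ‖u‖ := by
  simp [EuclideanSpace.norm_eq, Fin.sum_univ_two, jStar, add_comm]

lemma mulVecE_adjugate (A : Matrix (Fin 2) (Fin 2) ℂ) (u : C2) :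
    mulVecE A.adjugate u = -jStar (mulVecE Aᴴ (jStar u)) := by
  ext i
  fin_cases i <;> simp [Matrix.adjugate_fin_two, jStar, mulVecE_apply, add_comm]

lemma opn_adjugate_le (A : Matrix (Fin 2) (Fin 2) ℂ) : opn A.adjugate ≤ opn A :=
  ContinuousLinearMap.opNorm_le_bound _ (norm_nonneg _) fun u => by
    calc ‖mulVecE A.adjugate u‖ = ‖mulVecE Aᴴ (jStar u)‖ := by
          rw [mulVecE_adjugate, norm_neg, norm_jStar]
      _ ≤ opn A * ‖u‖ := by
          rw [← opn_conjTranspose A, ← norm_jStar u]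
          exact norm_mulVecE_le _ _

lemma norm_det_mul_norm_le (A : Matrix (Fin 2) (Fin 2) ℂ) (z : C2) :
    ‖A.det‖ * ‖z‖ ≤ opn A * ‖mulVecE A z‖ := by
  have hadj : mulVecE A.adjugate (mulVecE A z) = A.det • z := by
    simp only [mulVecE, ← mul_apply_eq_comp, ← map_mul, Matrix.adjugate_mul, map_smul, map_one]
    rfl
  calc ‖A.det‖ * ‖z‖ = ‖mulVecE A.adjugate (mulVecE A z)‖ := by rw [hadj, norm_smul]
    _ ≤ opn A.adjugate * ‖mulVecE A z‖ := norm_mulVecE_le _ _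
    _ ≤ opn A * ‖mulVecE A z‖ := mul_le_mul_of_nonneg_right (opn_adjugate_le A) (norm_nonneg _)

/-- For g ∈ SL(2,ℂ), the induced map on ℂP¹ is bi-Lipschitz with constant ‖g‖_op². -/
theorem stmt_1 (g : Matrix.SpecialLinearGroup (Fin 2) ℂ) (z w : C2)
    (hz : z ≠ 0) (hw : w ≠ 0) :
    ((opn (↑g)) ^ 2)⁻¹ * dCP z w ≤ dCP (mulVecE (↑g) z) (mulVecE (↑g) w) ∧
    dCP (mulVecE (↑g) z) (mulVecE (↑g) w) ≤ (opn (↑g)) ^ 2 * dCP z w := by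
  have hdet : ‖(g : Matrix (Fin 2) (Fin 2) ℂ).det‖ = 1 := by rw [g.det_coe, norm_one]
  have hnorm_le (u : C2) : ‖u‖ ≤ opn g * ‖mulVecE g u‖ := by
    simpa [hdet] using norm_det_mul_norm_le g u
  have hne {u : C2} (hu : u ≠ 0) : mulVecE g u ≠ 0 := by
    rintro h
    have := hnorm_le u
    simp [h, hu] at this
  have hwedge : ‖wedge (mulVecE g z) (mulVecE g w)‖ = ‖wedge z w‖ := by
    rw [wedge_mulVecE, norm_mul, hdet, one_mul]
  refine ⟨inv_mul_le_of_le_mul₀ (sq_nonneg _) (dCP_nonneg _ _) ?_, ?_⟩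
  · exact dCP_le_sq_mul_dCP_of_norm_le (hne hz) (hne hw) hwedge.symm
      (norm_mulVecE_le g z) (norm_mulVecE_le g w)
  · exact dCP_le_sq_mul_dCP_of_norm_le hz hw hwedge (hnorm_le z) (hnorm_le w)
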